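/- Let G be a unique product monoid, S a G-graded ring, and I a homogeneous two-sided ideal of S. Then I is a prime ideal if and only if for any homogeneous a, b ∈ S, if a S_g b ⊆ I for all g ∈ G then a ∈ I or b ∈ I. -/

import Mathlib

/-!
Write `a = ∑ aₓ` and `b = ∑ b_y` in homogeneous components and induct on the number of
components of `b`. Suppose `a S b ⊆ I` but `a, b ∉ I`, and fix a degree `g`. Let `U`, `V` be the
components of `a`, `b` occurring in some product `aₓ s b_y ∉ I` with `s ∈ S_g`. A unique product
`(x₁ g) y₁` of `U g` and `V` singles out `a_{x₁} s b_{y₁}` among the terms of `a s b` of its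
degree, so homogeneity of `I` puts it in `I`. Then `a S (a_{x₁} s (b - b_{y₁})) ⊆ I`, and
`a_{x₁} s (b - b_{y₁})` has fewer components than `b`, so by induction every `a_{x₁} s b_y` lies in
`I`, contradicting `x₁ ∈ U`. Hence `aₓ S_g b_y ⊆ I` for all `x`, `y`, `g`, and the graded condition
applied to components `aₓ, b_y ∉ I` gives a contradiction.
-/

/-- A unique product monoid. -/
def IsUPM (G : Type*) [Monoid G] : Prop :=
  ∀ X Y : Finset G, X.Nonempty → Y.Nonempty →
    ∃ x ∈ X, ∃ y ∈ Y, ∀ x' ∈ X, ∀ y' ∈ Y, x' * y' = x * y → x' = x ∧ y' = y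

theorem IsUPM.uniqueProds {G : Type*} [Monoid G] (h : IsUPM G) : UniqueProds G :=
  ⟨fun hX hY =>
    let ⟨x, hx, y, hy, hu⟩ := h _ _ hX hY
    ⟨x, hx, y, hy, fun _ _ hx' hy' he => hu _ hx' _ hy' he⟩⟩

theorem DirectSum.IsInternal.exists_finset_sum_eq {ι M σ : Type*} [DecidableEq ι]
    [AddCommMonoid M] [SetLike σ M] [AddSubmonoidClass σ M] {𝒜 : ι → σ}
    (h : DirectSum.IsInternal 𝒜) (m : M) :
    ∃ (T : Finset ι) (c : ι → M), (∀ i ∈ T, c i ∈ 𝒜 i) ∧ ∑ i ∈ T, c i = m := by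
  classical
  obtain ⟨f, rfl⟩ := h.surjective m
  refine ⟨f.support, fun i => f i, fun i _ => (f i).2, ?_⟩
  conv_rhs => rw [← DirectSum.sum_support_of f]
  simp only [map_sum, DirectSum.coeAddMonoidHom_of]

theorem DirectSum.IsInternal.mul_mul_mem_of_forall_homogeneous {G S : Type*} [DecidableEq G]
    [Ring S] {𝒮 : G → AddSubgroup S}
    (hS : DirectSum.IsInternal 𝒮) (J : TwoSidedIdeal S) {a b : S}
    (h : ∀ g, ∀ s ∈ 𝒮 g, a * s * b ∈ J) (s : S) : a * s * b ∈ J := by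
  obtain ⟨T, c, hc, rfl⟩ := hS.exists_finset_sum_eq s
  rw [Finset.mul_sum, Finset.sum_mul]
  exact sum_mem fun g hg => h g (c g) (hc g hg)

namespace TwoSidedIdeal

variable {G S : Type*} [Ring S]

theorem mul_mul_mul_sub_mem (J : TwoSidedIdeal S) {a b b₁ c : S} (h : ∀ t, a * t * b ∈ J)
    (hc : c * b₁ ∈ J) (t : S) : a * t * (c * (b - b₁)) ∈ J := by
  have hsplit : a * t * (c * (b - b₁)) = a * (t * c) * b - a * t * (c * b₁) := by noncomm_ring
  rw [hsplit]
  exact J.sub_mem (h _) (J.mul_mem_left _ _ hc)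

def IsHomogeneous (𝒮 : G → AddSubgroup S) (J : TwoSidedIdeal S) : Prop :=
  ∀ (T : Finset G) (c : G → S), (∀ g ∈ T, c g ∈ 𝒮 g) → ∑ g ∈ T, c g ∈ J → ∀ g ∈ T, c g ∈ J

variable {𝒮 : G → AddSubgroup S} {J : TwoSidedIdeal S}

theorem isHomogeneous_of_forall_fin
    (h : ∀ (k : ℕ) (c : Fin k → S) (d : Fin k → G), Function.Injective d →
      (∀ i, c i ∈ 𝒮 (d i)) → (∑ i, c i) ∈ J → ∀ i, c i ∈ J) :
    J.IsHomogeneous 𝒮 := by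
  intro T c hc hsum g hg
  let e := T.equivFin
  have hsum' : ∑ j, c (e.symm j) ∈ J := by
    rwa [e.symm.sum_comp (fun x : T => c x), Finset.sum_coe_sort T c]
  simpa using h T.card (fun j => c (e.symm j)) (fun j => e.symm j)
    (Subtype.val_injective.comp e.symm.injective) (fun j => hc _ (e.symm j).2) hsum' (e ⟨g, hg⟩)

namespace IsHomogeneous

theorem sum_filter_mem [DecidableEq G] (hJ : J.IsHomogeneous 𝒮) {ι : Type*} {T : Finset ι}
    {f : ι → S} {deg : ι → G} (hf : ∀ i ∈ T, f i ∈ 𝒮 (deg i)) (hsum : ∑ i ∈ T, f i ∈ J) (g : G) :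
    ∑ i ∈ T with deg i = g, f i ∈ J := by
  have hmaps : ∀ i ∈ T, deg i ∈ insert g (T.image deg) :=
    fun i hi => Finset.mem_insert_of_mem (Finset.mem_image_of_mem deg hi)
  refine hJ (insert g (T.image deg)) (fun g => ∑ i ∈ T with deg i = g, f i) (fun g' _ => ?_) ?_ g
    (Finset.mem_insert_self g _)
  · exact AddSubgroup.sum_mem _ fun i hi =>
      (Finset.mem_filter.1 hi).2 ▸ hf i (Finset.mem_filter.1 hi).1
  · rwa [Finset.sum_fiberwise_of_maps_to hmaps]

theorem mem_of_sum_mem_of_forall_ne (hJ : J.IsHomogeneous 𝒮) {ι : Type*} {T : Finset ι}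
    {f : ι → S} {deg : ι → G} (hf : ∀ i ∈ T, f i ∈ 𝒮 (deg i)) (hsum : ∑ i ∈ T, f i ∈ J)
    {i₀ : ι} (hi₀ : i₀ ∈ T) (hrest : ∀ i ∈ T, deg i = deg i₀ → i ≠ i₀ → f i ∈ J) :
    f i₀ ∈ J := by
  classical
  have hfiber := hJ.sum_filter_mem hf hsum (deg i₀)
  have hi₀' : i₀ ∈ T.filter fun i => deg i = deg i₀ := Finset.mem_filter.2 ⟨hi₀, rfl⟩
  rw [← Finset.add_sum_erase _ f hi₀'] at hfiber
  refine (add_mem_cancel_right (sum_mem fun i hi => ?_)).1 hfiber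
  obtain ⟨hne, hi⟩ := Finset.mem_erase.1 hi
  exact hrest i (Finset.mem_filter.1 hi).1 (Finset.mem_filter.1 hi).2 hne

theorem mem_of_sum_mem_of_injOn (hJ : J.IsHomogeneous 𝒮) {ι : Type*} {T : Finset ι}
    {f : ι → S} {deg : ι → G} (hf : ∀ i ∈ T, f i ∈ 𝒮 (deg i)) (hsum : ∑ i ∈ T, f i ∈ J)
    (hdeg : Set.InjOn deg T) : ∀ i ∈ T, f i ∈ J :=
  fun _ hi => hJ.mem_of_sum_mem_of_forall_ne hf hsum hi fun _ hj he hne =>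
    absurd (hdeg hj hi he) hne

variable [Mul G] [UniqueProds G] {ι κ : Type*} {A : Finset ι} {α : ι → S} {da : ι → G}

theorem forall_mul_mul_mem_of_rowClosed (hJ : J.IsHomogeneous 𝒮)
    (hmul : ∀ {g h : G} {a b : S}, a ∈ 𝒮 g → b ∈ 𝒮 h → a * b ∈ 𝒮 (g * h))
    {B : Finset κ} {β : κ → S} {db : κ → G} (hda : Set.InjOn da A) (hdb : Set.InjOn db B)
    (hα : ∀ x ∈ A, α x ∈ 𝒮 (da x)) (hβ : ∀ y ∈ B, β y ∈ 𝒮 (db y)) {g : G}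
    (hsum : ∀ s ∈ 𝒮 g, (∑ x ∈ A, α x) * s * ∑ y ∈ B, β y ∈ J)
    (hrow : ∀ x ∈ A, ∀ y ∈ B, ∀ s ∈ 𝒮 g, α x * s * β y ∈ J → ∀ w ∈ B, α x * s * β w ∈ J) :
    ∀ x ∈ A, ∀ y ∈ B, ∀ s ∈ 𝒮 g, α x * s * β y ∈ J := by
  classical
  have := UniqueProds.toIsCancelMul (G := G)
  by_contra! hbad
  set U := A.filter fun x => ∃ y ∈ B, ∃ s ∈ 𝒮 g, α x * s * β y ∉ J
  set V := B.filter fun y => ∃ x ∈ A, ∃ s ∈ 𝒮 g, α x * s * β y ∉ J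
  obtain ⟨x₀, hx₀, y₀, hy₀, s₀, hs₀, h₀⟩ := hbad
  have hU : U.Nonempty := ⟨x₀, Finset.mem_filter.2 ⟨hx₀, y₀, hy₀, s₀, hs₀, h₀⟩⟩
  have hV : V.Nonempty := ⟨y₀, Finset.mem_filter.2 ⟨hy₀, x₀, hx₀, s₀, hs₀, h₀⟩⟩
  obtain ⟨_, hu, _, hv, huniq⟩ :=
    UniqueProds.uniqueMul_of_nonempty (hU.image (da · * g)) (hV.image db)
  obtain ⟨x₁, hx₁, rfl⟩ := Finset.mem_image.1 hu
  obtain ⟨y₁, hy₁, rfl⟩ := Finset.mem_image.1 hv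
  obtain ⟨hx₁A, y, hy, s, hs, hxy⟩ := Finset.mem_filter.1 hx₁
  have hy₁B := (Finset.mem_filter.1 hy₁).1
  have hcorner : α x₁ * s * β y₁ ∈ J := by
    refine hJ.mem_of_sum_mem_of_forall_ne (T := A ×ˢ B) (f := fun p => α p.1 * s * β p.2)
      (deg := fun p => da p.1 * g * db p.2) (i₀ := (x₁, y₁)) ?_ ?_
      (Finset.mem_product.2 ⟨hx₁A, hy₁B⟩) ?_
    · rintro ⟨x, y⟩ hp
      obtain ⟨hx, hy⟩ := Finset.mem_product.1 hp
      exact hmul (hmul (hα x hx) hs) (hβ y hy)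
    · have := hsum s hs
      rwa [Finset.sum_mul, Finset.sum_mul_sum, ← Finset.sum_product'] at this
    -- `(x₁, y₁)` is the only pair of its degree in `U ×ˢ V`; every other pair has its row
    -- outside `U` or its column outside `V`.
    · rintro ⟨x, y⟩ hp hdeg hne
      obtain ⟨hx, hy⟩ := Finset.mem_product.1 hp
      by_cases hxU : x ∈ U
      · by_cases hyV : y ∈ V
        · obtain ⟨h₁, h₂⟩ :=
            huniq (Finset.mem_image_of_mem _ hxU) (Finset.mem_image_of_mem _ hyV) hdeg
          exact absurd (Prod.ext (hda hx hx₁A (mul_right_cancel h₁)) (hdb hy hy₁B h₂)) hne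
        · simp only [V, Finset.mem_filter, not_and, not_exists, not_not] at hyV
          exact hyV hy x hx s hs
      · simp only [U, Finset.mem_filter, not_and, not_exists, not_not] at hxU
        exact hxU hx y hy s hs
  exact hxy (hrow x₁ hx₁A y₁ hy₁B s hs hcorner y hy)

theorem sum_mem_or_sum_mem (hJ : J.IsHomogeneous 𝒮)
    (hmul : ∀ {g h : G} {a b : S}, a ∈ 𝒮 g → b ∈ 𝒮 h → a * b ∈ 𝒮 (g * h))
    (hprime : ∀ (ga : G) (a : S), a ∈ 𝒮 ga → ∀ (gb : G) (b : S), b ∈ 𝒮 gb →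
      (∀ g : G, ∀ s ∈ 𝒮 g, a * s * b ∈ J) → a ∈ J ∨ b ∈ J)
    (hda : Set.InjOn da A) (hα : ∀ x ∈ A, α x ∈ 𝒮 (da x)) (B : Finset κ) {β : κ → S}
    {db : κ → G} (hdb : Set.InjOn db B) (hβ : ∀ y ∈ B, β y ∈ 𝒮 (db y))
    (h : ∀ s, (∑ x ∈ A, α x) * s * ∑ y ∈ B, β y ∈ J) :
    ∑ x ∈ A, α x ∈ J ∨ ∑ y ∈ B, β y ∈ J := by
  classical
  have := UniqueProds.toIsCancelMul (G := G)
  induction B using Finset.strongInduction generalizing β db with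
  | H B ih =>
    by_contra! ⟨hA, hB⟩
    have hrow : ∀ g, ∀ x ∈ A, ∀ y ∈ B, ∀ s ∈ 𝒮 g,
        α x * s * β y ∈ J → ∀ w ∈ B, α x * s * β w ∈ J := by
      intro g x hx y hy s hs hxy
      have hinj : Set.InjOn (fun w => da x * g * db w) (B.erase y) := fun w hw w' hw' he =>
        hdb (Finset.mem_of_mem_erase hw) (Finset.mem_of_mem_erase hw') (mul_left_cancel he)
      have hmem : ∀ w ∈ B.erase y, α x * s * β w ∈ 𝒮 (da x * g * db w) := fun w hw =>
        hmul (hmul (hα x hx) hs) (hβ w (Finset.mem_of_mem_erase hw))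
      have hrest : ∑ w ∈ B.erase y, α x * s * β w ∈ J := by
        refine (ih _ (Finset.erase_ssubset hy) hinj hmem fun t => ?_).resolve_left hA
        rw [← Finset.mul_sum, Finset.sum_erase_eq_sub hy]
        exact J.mul_mul_mul_sub_mem h hxy t
      intro w hw
      rcases eq_or_ne w y with rfl | hwy
      · exact hxy
      · exact hJ.mem_of_sum_mem_of_injOn hmem hrest hinj w (Finset.mem_erase.2 ⟨hwy, hw⟩)
    obtain ⟨x₀, hx₀, hαx₀⟩ : ∃ x ∈ A, α x ∉ J := by
      by_contra! hall
      exact hA (sum_mem hall)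
    obtain ⟨y₀, hy₀, hβy₀⟩ : ∃ y ∈ B, β y ∉ J := by
      by_contra! hall
      exact hB (sum_mem hall)
    have hprod g :=
      hJ.forall_mul_mul_mem_of_rowClosed hmul hda hdb hα hβ (fun s _ => h s) (hrow g)
    exact (hprime _ _ (hα x₀ hx₀) _ _ (hβ y₀ hy₀) fun g s hs =>
      hprod g x₀ hx₀ y₀ hy₀ s hs).elim hαx₀ hβy₀

end IsHomogeneous

end TwoSidedIdeal

theorem stmt10_general {G : Type*} [Monoid G] [DecidableEq G] (hUP : IsUPM G)
    {S : Type*} [Ring S] (𝒮 : G → AddSubgroup S)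
    (hSdir : DirectSum.IsInternal 𝒮)
    (hmul : ∀ {g h : G} {a b : S}, a ∈ 𝒮 g → b ∈ 𝒮 h → a * b ∈ 𝒮 (g * h))
    (I : Set S) (hI0 : (0 : S) ∈ I)
    (hIadd : ∀ a ∈ I, ∀ b ∈ I, a + b ∈ I) (hIneg : ∀ a ∈ I, -a ∈ I)
    (hImul : ∀ a ∈ I, ∀ t : S, a * t ∈ I ∧ t * a ∈ I)
    (hIhom : ∀ (k : ℕ) (c : Fin k → S) (d : Fin k → G), Function.Injective d →
      (∀ i, c i ∈ 𝒮 (d i)) → (∑ i, c i) ∈ I → ∀ i, c i ∈ I) :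
    (∀ a b : S, (∀ s : S, a * s * b ∈ I) → a ∈ I ∨ b ∈ I) ↔
    (∀ (ga : G) (a : S), a ∈ 𝒮 ga → ∀ (gb : G) (b : S), b ∈ 𝒮 gb →
      (∀ g : G, ∀ s ∈ 𝒮 g, a * s * b ∈ I) → a ∈ I ∨ b ∈ I) := by
  have := hUP.uniqueProds
  obtain ⟨J, rfl⟩ : ∃ J : TwoSidedIdeal S, (J : Set S) = I :=
    ⟨_, TwoSidedIdeal.coe_mk' I hI0 (hIadd _ · _ ·) (hIneg _ ·)
      (fun hy => (hImul _ hy _).2) (fun hx => (hImul _ hx _).1)⟩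
  have hJ : J.IsHomogeneous 𝒮 := TwoSidedIdeal.isHomogeneous_of_forall_fin hIhom
  refine ⟨fun hprime ga a _ gb b _ h => hprime a b (hSdir.mul_mul_mem_of_forall_homogeneous J h),
    fun hprime a b h => ?_⟩
  obtain ⟨A, α, hα, rfl⟩ := hSdir.exists_finset_sum_eq a
  obtain ⟨B, β, hβ, rfl⟩ := hSdir.exists_finset_sum_eq b
  exact hJ.sum_mem_or_sum_mem hmul hprime (Set.injOn_id _) hα B (Set.injOn_id _) hβ h

/-- Let `G` be a unique product monoid, `S` a `G`-graded ring, and `I` a proper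
homogeneous two-sided ideal of `S`.  Then `I` is prime iff for any homogeneous
`a, b ∈ S`, `a S_g b ⊆ I` for all `g ∈ G` implies `a ∈ I` or `b ∈ I`. -/
theorem stmt10 {G : Type*} [Monoid G] [DecidableEq G] (hUP : IsUPM G)
    {S : Type*} [Ring S] (𝒮 : G → AddSubgroup S)
    (hSdir : DirectSum.IsInternal 𝒮) (hone : (1 : S) ∈ 𝒮 1)
    (hmul : ∀ {g h : G} {a b : S}, a ∈ 𝒮 g → b ∈ 𝒮 h → a * b ∈ 𝒮 (g * h))
    (I : Set S) (hI0 : (0 : S) ∈ I)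
    (hIadd : ∀ a ∈ I, ∀ b ∈ I, a + b ∈ I) (hIneg : ∀ a ∈ I, -a ∈ I)
    (hImul : ∀ a ∈ I, ∀ t : S, a * t ∈ I ∧ t * a ∈ I)
    (hIhom : ∀ (k : ℕ) (c : Fin k → S) (d : Fin k → G), Function.Injective d →
      (∀ i, c i ∈ 𝒮 (d i)) → (∑ i, c i) ∈ I → ∀ i, c i ∈ I)
    (h1 : (1 : S) ∉ I) :
    (∀ a b : S, (∀ s : S, a * s * b ∈ I) → a ∈ I ∨ b ∈ I) ↔
    (∀ (ga : G) (a : S), a ∈ 𝒮 ga → ∀ (gb : G) (b : S), b ∈ 𝒮 gb →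
      (∀ g : G, ∀ s ∈ 𝒮 g, a * s * b ∈ I) → a ∈ I ∨ b ∈ I) :=
  stmt10_general hUP 𝒮 hSdir hmul I hI0 hIadd hIneg hImul hIhom
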